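/- arXiv:2212.05167 — 2 statements merged into one kernel-verified Lean document; each statement's English description precedes it below -/
import Mathlib

section
/- Let {T_n, α_n} be an inverse sequence in which each T_n is a finite graph that is an arc and each bonding map α_n : T_{n+1} → T_n is a monotone epimorphism. Then the inverse limit topological graph T = lim← {T_n, α_n} is an arc. -/
/-- A subset `S` of the vertices of a topological graph is connected if it cannot be
partitioned into two nonempty relatively closed sets with no edge between them. -/
def TConnSet {V : Type*} [TopologicalSpace V] (E : V → V → Prop) (S : Set V) : Prop :=
  ¬ ∃ P Q : Set V, P.Nonempty ∧ Q.Nonempty ∧ Disjoint P Q ∧ P ∪ Q = S ∧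
      IsClosed {x : S | (x : V) ∈ P} ∧ IsClosed {x : S | (x : V) ∈ Q} ∧
      ∀ a ∈ P, ∀ b ∈ Q, ¬ E a b

/-- A topological graph structure: a closed, reflexive, symmetric edge relation. -/
def IsTopGraph {V : Type*} [TopologicalSpace V] (E : V → V → Prop) : Prop :=
  (∀ v, E v v) ∧ (∀ a b, E a b → E b a) ∧ IsClosed {p : V × V | E p.1 p.2}

/-- An epimorphism of topological graphs: continuous, edge-preserving, surjective on
vertices and on edges. -/
def IsTopEpi {V W : Type*} [TopologicalSpace V] [TopologicalSpace W]
    (EG : V → V → Prop) (EH : W → W → Prop) (f : V → W) : Prop :=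
  Continuous f ∧ (∀ a b, EG a b → EH (f a) (f b)) ∧ Function.Surjective f ∧
    ∀ c d, EH c d → ∃ a b, EG a b ∧ f a = c ∧ f b = d

/-- Vertices of the inverse limit of an inverse sequence of graphs. -/
abbrev InvLimV {V : ℕ → Type*} (α : ∀ n, V (n + 1) → V n) : Type _ :=
  {x : ∀ n, V n // ∀ n, α n (x (n + 1)) = x n}

/-- Edges of the inverse limit: coordinatewise edges. -/
def InvLimE {V : ℕ → Type*} (E : ∀ n, V n → V n → Prop)
    (α : ∀ n, V (n + 1) → V n) : InvLimV α → InvLimV α → Prop :=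
  fun a b => ∀ n, E n (a.1 n) (b.1 n)

/-- An epimorphism of graphs: edge-preserving, surjective on vertices and on edges. -/
def IsEpi {V W : Type*} (EG : V → V → Prop) (EH : W → W → Prop) (f : V → W) : Prop :=
  (∀ a b, EG a b → EH (f a) (f b)) ∧ Function.Surjective f ∧
    ∀ c d, EH c d → ∃ a b, EG a b ∧ f a = c ∧ f b = d

/-!
Each level is a finite arc, hence a path. A monotone epimorphism between two paths is monotone
or antitone along them, since its fibres are intervals and consecutive vertices go to equal or
adjacent ones; so the paths can be oriented coherently, and the positions of a thread's
coordinates give an order on the limit compatible with the bonding maps.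

The limit is connected by compactness: a separation of the limit into closed sets with no edge
between them already has no edge between its projections to some level, which is connected.
The threads of least and greatest position are the ends: any other thread `x` separates the
threads eventually below `x` from those eventually above it, as an edge between the two would
jump over `x` at some level.
-/

namespace ArcInverseLimit

open Relation

section RelConnected

variable {W : Type*} {R : W → W → Prop}

def inducedRel (R : W → W → Prop) (S : Set W) (u v : W) : Prop :=
  u ∈ S ∧ v ∈ S ∧ R u v

def RelConnected (R : W → W → Prop) (S : Set W) : Prop :=
  ∀ ⦃u⦄, u ∈ S → ∀ ⦃v⦄, v ∈ S → ReflTransGen (inducedRel R S) u v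

def IsCut (R : W → W → Prop) (S : Set W) (x : W) : Prop :=
  ¬ RelConnected R (S \ {x})

instance [Std.Symm R] (S : Set W) : Std.Symm (inducedRel R S) :=
  ⟨fun _ _ h => ⟨h.2.1, h.1, symm_of R h.2.2⟩⟩

theorem relConnected_of_reachable_from [Std.Symm R] {S : Set W} {w : W}
    (h : ∀ v ∈ S, ReflTransGen (inducedRel R S) w v) : RelConnected R S :=
  fun u hu v hv => (symm_of _ (h u hu)).trans (h v hv)

theorem not_relConnected_of_partition {S A B : Set W} (hA : A.Nonempty) (hB : B.Nonempty)
    (hdisj : Disjoint A B) (hunion : A ∪ B = S) (hno : ∀ a ∈ A, ∀ b ∈ B, ¬ R a b) :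
    ¬ RelConnected R S := by
  obtain ⟨a, ha⟩ := hA
  obtain ⟨b, hb⟩ := hB
  intro hconn
  have stays : ∀ v, ReflTransGen (inducedRel R S) a v → v ∈ A := by
    intro v hv
    induction hv with
    | refl => exact ha
    | tail _ hstep ih =>
      rcases hunion.symm ▸ hstep.2.1 with h | h
      · exact h
      · exact absurd hstep.2.2 (hno _ ih _ h)
  exact hdisj.ne_of_mem (stays b (hconn (hunion ▸ Or.inl ha) (hunion ▸ Or.inr hb))) hb rfl

theorem exists_partition_of_not_relConnected {S : Set W} (h : ¬ RelConnected R S) :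
    ∃ A B : Set W, A.Nonempty ∧ B.Nonempty ∧ Disjoint A B ∧ A ∪ B = S ∧
      ∀ a ∈ A, ∀ b ∈ B, ¬ R a b := by
  simp only [RelConnected, not_forall] at h
  obtain ⟨u, hu, v, hv, huv⟩ := h
  refine ⟨{w ∈ S | ReflTransGen (inducedRel R S) u w},
    {w ∈ S | ¬ ReflTransGen (inducedRel R S) u w}, ⟨u, hu, .refl⟩, ⟨v, hv, huv⟩,
    Set.disjoint_left.mpr fun _ h h' => h'.2 h.2,
    by ext; simp only [Set.mem_union, Set.mem_ofPred_eq]; tauto, ?_⟩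
  rintro a ⟨ha, hua⟩ b ⟨hb, hub⟩ hab
  exact hub (hua.tail ⟨ha, hb, hab⟩)

theorem tConnSet_iff_relConnected [TopologicalSpace W] [DiscreteTopology W] {S : Set W} :
    TConnSet R S ↔ RelConnected R S := by
  constructor
  · intro h
    by_contra hconn
    obtain ⟨A, B, hA, hB, hdisj, hunion, hno⟩ := exists_partition_of_not_relConnected hconn
    exact h ⟨A, B, hA, hB, hdisj, hunion, isClosed_discrete _, isClosed_discrete _, hno⟩
  · rintro h ⟨A, B, hA, hB, hdisj, hunion, -, -, hno⟩
    exact not_relConnected_of_partition hA hB hdisj hunion hno h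

theorem RelConnected.insert_of_adj [Std.Symm R] {T : Set W} (hT : RelConnected R T) {w y : W}
    (hy : y ∈ T) (hwy : R w y) : RelConnected R (insert w T) := by
  have lift {u v : W} (h : ReflTransGen (inducedRel R T) u v) :
      ReflTransGen (inducedRel R (insert w T)) u v :=
    ReflTransGen.mono (fun _ _ h => ⟨.inr h.1, .inr h.2.1, h.2.2⟩) _ _ h
  refine relConnected_of_reachable_from (w := w) fun v hv => ?_
  rcases hv with rfl | hv
  · exact .refl
  · exact .head ⟨.inl rfl, .inr hy, hwy⟩ (lift (hT hy hv))

theorem RelConnected.exists_adj_ne {S : Set W} (hS : RelConnected R S) {w u : W} (hw : w ∈ S)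
    (hu : u ∈ S) (huw : u ≠ w) : ∃ y ∈ S, y ≠ w ∧ R w y := by
  have key (z : W) (h : ReflTransGen (inducedRel R S) z u) :
      z = u ∨ ∃ y ∈ S, y ≠ z ∧ R z y := by
    induction h using ReflTransGen.head_induction_on with
    | refl => exact .inl rfl
    | @head a b hab _ ih =>
      by_cases hba : b = a
      · exact hba ▸ ih
      · exact .inr ⟨b, hab.2.1, hba, hab.2.2⟩
  exact (key w (hS hw hu)).resolve_left huw.symm


def reachIn (R : W → W → Prop) (S : Set W) : ℕ → W → W → Prop
  | 0 => Eq
  | n + 1 => fun u v => ∃ w, reachIn R S n u w ∧ inducedRel R S w v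

theorem exists_reachIn {S : Set W} {u v : W} (h : ReflTransGen (inducedRel R S) u v) :
    ∃ n, reachIn R S n u v := by
  induction h with
  | refl => exact ⟨0, rfl⟩
  | tail _ hstep ih =>
    obtain ⟨n, hn⟩ := ih
    exact ⟨n + 1, _, hn, hstep⟩

/-- A vertex farthest from `v` is not a cut vertex: every other vertex is reached from `v`
along a shortest route, whose vertices are all closer to `v`. -/
theorem RelConnected.exists_relConnected_diff [Std.Symm R] {S : Set W} (hfin : S.Finite)
    (hS : RelConnected R S) {u v : W} (hu : u ∈ S) (hv : v ∈ S) (huv : u ≠ v) :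
    ∃ w ∈ S, w ≠ v ∧ RelConnected R (S \ {w}) := by
  let d : W → ℕ := fun x => sInf {n | reachIn R S n v x}
  have hd {x : W} (hx : x ∈ S) : reachIn R S (d x) v x :=
    Nat.sInf_mem (exists_reachIn (hS hv hx))
  have hd0 {x : W} (hx : x ∈ S) (h : d x = 0) : v = x := by
    simpa [h, reachIn] using hd hx
  obtain ⟨w, hw, hmax⟩ := Set.exists_max_image S d hfin ⟨v, hv⟩
  have hwv : w ≠ v := by
    rintro rfl
    have : d w = 0 := Nat.sInf_eq_zero.mpr (.inl rfl)
    exact huv (hd0 hu (by have := hmax u hu; omega)).symm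
  refine ⟨w, hw, hwv, relConnected_of_reachable_from (w := v) ?_⟩
  suffices key : ∀ k, ∀ x ∈ S, x ≠ w → d x = k →
      ReflTransGen (inducedRel R (S \ {w})) v x from
    fun x hx => key _ x hx.1 hx.2 rfl
  intro k
  induction k using Nat.strong_induction_on with
  | _ k ih =>
    intro x hx hxw hdx
    obtain _ | k := k
    · exact (hd0 hx hdx) ▸ .refl
    obtain ⟨y, hy, hyx⟩ := hdx ▸ hd hx
    have hdy : d y ≤ k := Nat.sInf_le hy
    have hyw : y ≠ w := by
      rintro rfl
      have := hmax x hx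
      omega
    exact (ih (d y) (by omega) y hyx.1 hyw rfl).tail ⟨⟨hyx.1, hyw⟩, ⟨hx, hxw⟩, hyx.2.2⟩

end RelConnected

section PathList

variable {W : Type*} {R : W → W → Prop} {l : List W}

def IsPathList (R : W → W → Prop) (l : List W) : Prop :=
  ∀ (i j : ℕ) (hi : i < l.length) (hj : j < l.length),
    R l[i] l[j] ↔ i ≤ j + 1 ∧ j ≤ i + 1

theorem IsPathList.reverse (hl : IsPathList R l) : IsPathList R l.reverse := by
  intro i j hi hj
  simp only [List.length_reverse] at hi hj
  rw [List.getElem_reverse, List.getElem_reverse, hl _ _ (by omega) (by omega)]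
  omega

theorem IsPathList.tail (hl : IsPathList R l) : IsPathList R l.tail := by
  intro i j hi hj
  simp only [List.length_tail] at hi hj
  rw [List.getElem_tail, List.getElem_tail, hl _ _ (by omega) (by omega)]
  omega

theorem IsPathList.cons [Std.Refl R] [Std.Symm R] {x y : W} (hl : IsPathList R (y :: l))
    (hxy : R x y) (hx : ∀ z ∈ l, ¬ R x z) : IsPathList R (x :: y :: l) := by
  have head (k : ℕ) (hk : k < (x :: y :: l).length) : R x (x :: y :: l)[k] ↔ k ≤ 1 := by
    rcases k with _ | _ | k
    · simpa using refl_of R x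
    · simpa using hxy
    · simpa using hx _ (List.getElem_mem _)
  intro i j hi hj
  rcases i with _ | i
  · simpa using head j hj
  rcases j with _ | j
  · simpa [comm_of R] using head (i + 1) hi
  simpa using hl i j (by simpa using hi) (by simpa using hj)

theorem IsPathList.relConnected [Std.Symm R] (hl : IsPathList R l) :
    RelConnected R {x | x ∈ l} := by
  rcases l with _ | ⟨a, t⟩
  · simp [RelConnected]
  have reach (i : ℕ) (hi : i < (a :: t).length) :
      ReflTransGen (inducedRel R {x | x ∈ a :: t}) a (a :: t)[i] := by
    induction i with
    | zero => exact .refl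
    | succ i ih =>
      exact (ih (by omega)).tail ⟨List.getElem_mem _, List.getElem_mem _,
        (hl i (i + 1) (by omega) hi).mpr (by omega)⟩
  refine relConnected_of_reachable_from (w := a) fun v hv => ?_
  obtain ⟨i, hi, rfl⟩ := List.mem_iff_getElem.mp hv
  exact reach i hi

theorem IsPathList.not_isCut_head [Std.Symm R] (hl : IsPathList R l) (hnd : l.Nodup)
    (hne : l ≠ []) : ¬ IsCut R {x | x ∈ l} (l.head hne) := by
  obtain ⟨a, t, rfl⟩ := List.exists_cons_of_ne_nil hne
  have : {x | x ∈ a :: t} \ {a} = {x | x ∈ t} := by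
    ext x
    have := (List.nodup_cons.mp hnd).1
    simp only [List.mem_cons, Set.mem_sdiff, Set.mem_ofPred_eq, Set.mem_singleton_iff]
    constructor
    · rintro ⟨rfl | h, hxa⟩ <;> tauto
    · exact fun h => ⟨.inr h, by rintro rfl; tauto⟩
  simpa only [IsCut, List.head_cons, List.tail_cons, this, not_not] using hl.tail.relConnected

theorem IsPathList.not_isCut_getLast [Std.Symm R] (hl : IsPathList R l) (hnd : l.Nodup)
    (hne : l ≠ []) : ¬ IsCut R {x | x ∈ l} (l.getLast hne) := by
  have hne' : l.reverse ≠ [] := by simpa using hne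
  simpa [List.head_reverse] using hl.reverse.not_isCut_head (List.nodup_reverse.mpr hnd) hne'

end PathList

section ArcPath

variable {W : Type*} {R : W → W → Prop}

theorem isCut_diff_of_adj [Std.Symm R] {S : Set W} {w c y : W} (hw : w ∈ S)
    (hcut : ∀ x ∈ S, x ≠ w → x ≠ c → IsCut R S x) (hy : y ∈ S \ {w}) (hwy : R w y) :
    ∀ x ∈ S \ {w}, x ≠ c → x ≠ y → IsCut R (S \ {w}) x := by
  rintro x ⟨hxS, hxw : x ≠ w⟩ hxc hxy hconn
  have hS : S \ {x} = insert w ((S \ {w}) \ {x}) := by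
    ext z
    by_cases hz : z = w
    · subst hz; simp [hw, hxw.symm]
    · simp [hz]
  exact hcut x hxS hxw hxc (hS ▸ hconn.insert_of_adj ⟨hy, hxy.symm⟩ hwy)

theorem getLast_cons_ne_head {e : W} {rest : List W} (hnd : (e :: rest).Nodup)
    (hrest : rest ≠ []) : (e :: rest).getLast (List.cons_ne_nil e rest) ≠ e := by
  rw [List.getLast_cons hrest]
  exact fun h => (List.nodup_cons.mp hnd).1 (h ▸ List.getLast_mem hrest)

/-- Both ends of `e :: rest` are non-cut; if `w` had a second neighbour `z`, they would both
have to be `c`. -/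
theorem IsPathList.not_rel_of_mem_tail [Std.Symm R] {e : W} {rest : List W}
    (hl : IsPathList R (e :: rest)) (hnd : (e :: rest).Nodup) {w c : W} (hwe : R w e)
    (hends : ∀ z ∈ e :: rest, R w z → ∀ x ∈ e :: rest, x ≠ c → x ≠ z →
      IsCut R {x | x ∈ e :: rest} x) :
    ∀ z ∈ rest, ¬ R w z := by
  intro z hz hwz
  have hrest : rest ≠ [] := List.ne_nil_of_mem hz
  have heRest : e ∉ rest := (List.nodup_cons.mp hnd).1
  set t := (e :: rest).getLast (List.cons_ne_nil e rest)
  have hte : t ≠ e := getLast_cons_ne_head hnd hrest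
  have he := hl.not_isCut_head hnd (List.cons_ne_nil e rest)
  have ht := hl.not_isCut_getLast hnd (List.cons_ne_nil e rest)
  have hec : e = c := by
    by_contra h
    exact he (hends z (.tail _ hz) hwz e (.head _) h (by rintro rfl; exact heRest hz))
  have htc : t = c := by
    by_contra h
    exact ht (hends e (.head _) hwe t (List.getLast_mem _) h hte)
  exact hte (htc.trans hec.symm)

theorem IsPathList.exists_insert [Std.Refl R] [Std.Symm R] {l : List W} (hl : IsPathList R l)
    (hnd : l.Nodup) {w c y : W} (hw : w ∉ l) (hy : y ∈ l) (hwy : R w y)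
    (hends : ∀ z ∈ l, R w z → ∀ x ∈ l, x ≠ c → x ≠ z → IsCut R {x | x ∈ l} x) :
    ∃ L : List W, L.Nodup ∧ (∀ x, x ∈ L ↔ x = w ∨ x ∈ l) ∧ IsPathList R L := by
  suffices key : ∀ L : List W, IsPathList R L → L.Nodup → (∀ x, x ∈ L ↔ x ∈ l) →
      ∀ hL : L ≠ [], R w (L.head hL) →
      ∃ L : List W, L.Nodup ∧ (∀ x, x ∈ L ↔ x = w ∨ x ∈ l) ∧ IsPathList R L by
    obtain ⟨e, rest, rfl⟩ := List.exists_cons_of_ne_nil (List.ne_nil_of_mem hy)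
    by_cases hye : y = e
    · exact key _ hl hnd (fun _ => .rfl) (List.cons_ne_nil e rest) (hye ▸ hwy)
    have hrest : rest ≠ [] := List.ne_nil_of_mem ((List.mem_cons.mp hy).resolve_left hye)
    have hec : e = c := by
      by_contra h
      exact hl.not_isCut_head hnd (List.cons_ne_nil e rest)
        (hends y hy hwy e (.head _) h (Ne.symm hye))
    have hlast : (e :: rest).getLast (List.cons_ne_nil e rest) = y := by
      by_contra h
      exact hl.not_isCut_getLast hnd (List.cons_ne_nil e rest)
        (hends y hy hwy _ (List.getLast_mem _) (hec ▸ getLast_cons_ne_head hnd hrest) h)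
    exact key _ hl.reverse (List.nodup_reverse.mpr hnd) (fun _ => List.mem_reverse)
      (by simp) (by rwa [List.head_reverse, hlast])
  intro L hL hLnd hLl hLne hwe
  obtain ⟨e, rest, rfl⟩ := List.exists_cons_of_ne_nil hLne
  have hset : {x | x ∈ e :: rest} = {x | x ∈ l} := Set.ext hLl
  refine ⟨w :: e :: rest, List.nodup_cons.mpr ⟨fun h => hw ((hLl w).mp h), hLnd⟩,
    fun x => by rw [List.mem_cons, hLl],
    hL.cons hwe (hL.not_rel_of_mem_tail hLnd hwe (c := c) ?_)⟩
  intro z hz hwz x hx hxc hxz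
  rw [hset]
  exact hends z ((hLl z).mp hz) hwz x ((hLl x).mp hx) hxc hxz

/-- Induction on the number of vertices: remove a non-cut end `w`; what is left is again
such a graph, its ends being the other non-cut vertex and any neighbour of `w`. -/
theorem exists_isPathList_of_isCut [Std.Refl R] [Std.Symm R] {S : Set W} (hfin : S.Finite)
    (hS : RelConnected R S) {a b : W} (hab : ∀ x ∈ S, x ≠ a → x ≠ b → IsCut R S x) :
    ∃ l : List W, l.Nodup ∧ (∀ x, x ∈ l ↔ x ∈ S) ∧ IsPathList R l := by
  induction hn : S.ncard using Nat.strong_induction_on generalizing S a b with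
  | _ n ih =>
  rcases le_or_gt n 1 with hle | hlt
  · rcases (Set.ncard_le_one_iff_eq hfin).mp (hn ▸ hle) with rfl | ⟨v, rfl⟩
    · exact ⟨[], List.nodup_nil, by simp, by simp [IsPathList]⟩
    · refine ⟨[v], List.nodup_singleton v, by simp, ?_⟩
      intro i j hi hj
      simp only [List.length_singleton, Nat.lt_one_iff] at hi hj
      subst hi hj
      simpa using refl_of R v
  obtain ⟨u, v, hu, hv, huv⟩ := (Set.one_lt_ncard_iff hfin).mp (hn ▸ hlt)
  obtain ⟨w, hw, hwu, hSw⟩ := hS.exists_relConnected_diff hfin hv hu huv.symm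
  obtain ⟨w', hw', hw'w, hSw'⟩ := hS.exists_relConnected_diff hfin hu hw hwu.symm
  have hcut : ∀ x ∈ S, x ≠ w → x ≠ w' → IsCut R S x := by
    have hw_ab : w = a ∨ w = b := by
      by_contra! h; exact hab w hw h.1 h.2 hSw
    have hw'_ab : w' = a ∨ w' = b := by
      by_contra! h; exact hab w' hw' h.1 h.2 hSw'
    intro x hx hxw hxw'
    apply hab x hx <;> rintro rfl <;> grind
  obtain ⟨y, hy, hyw, hwy⟩ := hS.exists_adj_ne hw hu hwu.symm
  have hcard : (S \ {w}).ncard < n := by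
    rw [← hn, Set.ncard_sdiff_singleton_of_mem hw]
    omega
  obtain ⟨l, hnd, hl, hpath⟩ :=
    ih _ hcard hfin.sdiff hSw (isCut_diff_of_adj hw hcut ⟨hy, hyw⟩ hwy) rfl
  have hset : {x | x ∈ l} = S \ {w} := Set.ext hl
  obtain ⟨L, hLnd, hL, hLpath⟩ := hpath.exists_insert hnd (fun h => ((hl w).mp h).2 rfl)
    ((hl y).mpr ⟨hy, hyw⟩) hwy (c := w') fun z hz hwz => by
      rw [hset]
      intro x hx
      exact isCut_diff_of_adj hw hcut ((hl z).mp hz) hwz x ((hl x).mp hx)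
  refine ⟨L, hLnd, fun x => ?_, hLpath⟩
  rw [hL, hl]
  by_cases hxw : x = w
  · simp [hxw, hw]
  · simp [hxw]

structure IsSpanningPath (R : W → W → Prop) (l : List W) : Prop where
  nodup : l.Nodup
  mem : ∀ x, x ∈ l
  isPathList : IsPathList R l

theorem IsSpanningPath.reverse {l : List W} (hl : IsSpanningPath R l) :
    IsSpanningPath R l.reverse :=
  ⟨List.nodup_reverse.mpr hl.nodup, fun x => List.mem_reverse.mpr (hl.mem x),
    hl.isPathList.reverse⟩

theorem exists_isSpanningPath [Finite W] [Std.Refl R] [Std.Symm R]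
    (hconn : RelConnected R Set.univ) {a b : W}
    (hab : ∀ x, x ≠ a → x ≠ b → IsCut R Set.univ x) : ∃ l, IsSpanningPath R l := by
  obtain ⟨l, hnd, hl, hpath⟩ :=
    exists_isPathList_of_isCut Set.finite_univ hconn fun x _ => hab x
  exact ⟨l, ⟨hnd, fun x => (hl x).mpr trivial, hpath⟩⟩

end ArcPath

section Walk

variable {β : Type*} [LinearOrder β] {q : ℕ → β} {m : ℕ}

/-- Between the first and the last maximum of `q` on `[s, u + 1]` the values `q (p₁ - 1)` and
`q (p₂ + 1)` are both the value just below the maximum, so the fibre of that value is not an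
interval. -/
theorem false_of_rise_of_fall (hup : ∀ i, i + 1 < m → ∀ c, q i < c → q (i + 1) ≤ c)
    (hdown : ∀ i, i + 1 < m → ∀ c, c < q i → c ≤ q (i + 1))
    (hfib : ∀ i j k, i ≤ j → j ≤ k → k < m → q i = q k → q j = q i)
    {s u : ℕ} (hsu : s ≤ u) (hum : u + 1 < m) (hs : q s < q (s + 1)) (hu : q (u + 1) < q u) :
    False := by
  classical
  obtain ⟨p, hp, hmax⟩ := (Finset.Icc s (u + 1)).exists_max_image q ⟨s, by simp; omega⟩
  simp only [Finset.mem_Icc] at hp hmax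
  let P : ℕ → Prop := fun i => s ≤ i ∧ i ≤ u + 1 ∧ q i = q p
  have hP : ∃ i, P i := ⟨p, hp.1, hp.2, rfl⟩
  obtain ⟨hp₁s, hp₁u, hp₁⟩ : P (Nat.find hP) := Nat.find_spec hP
  obtain ⟨hp₂s, hp₂u, hp₂⟩ : P (Nat.findGreatest P (u + 1)) :=
    Nat.findGreatest_spec hp.2 ⟨hp.1, hp.2, rfl⟩
  set p₁ := Nat.find hP
  set p₂ := Nat.findGreatest P (u + 1)
  have hp₁p₂ : p₁ ≤ p₂ := Nat.le_findGreatest hp₁u ⟨hp₁s, hp₁u, hp₁⟩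
  have hsp₁ : s < p₁ := by
    refine lt_of_le_of_ne hp₁s fun h => ?_
    have := hmax (s + 1) (by omega)
    rw [← hp₁, ← h] at this
    exact (not_le.mpr hs) this
  have hp₂u' : p₂ < u + 1 := by
    refine lt_of_le_of_ne hp₂u fun h => ?_
    have := hmax u (by omega)
    rw [← hp₂, h] at this
    exact (not_le.mpr hu) this
  have h₁ : q (p₁ - 1) < q p := lt_of_le_of_ne (hmax _ (by omega))
    fun h => Nat.find_min hP (by omega : p₁ - 1 < p₁) ⟨by omega, by omega, h⟩
  have h₂ : q (p₂ + 1) < q p := lt_of_le_of_ne (hmax _ (by omega))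
    fun h => Nat.findGreatest_is_greatest (by omega : p₂ < p₂ + 1) (by omega)
      ⟨by omega, by omega, h⟩
  have hup₁ := hup (p₁ - 1) (by omega)
  rw [Nat.sub_add_cancel (by omega : 1 ≤ p₁), hp₁] at hup₁
  have hdown₂ := hdown p₂ (by omega)
  rw [hp₂] at hdown₂
  have heq : q (p₁ - 1) = q (p₂ + 1) :=
    le_antisymm (hdown₂ _ h₁) (not_lt.mp fun h => (not_le.mpr h₂) (hup₁ _ h))
  have := hfib (p₁ - 1) p₁ (p₂ + 1) (by omega) (by omega) (by omega) heq
  exact h₁.ne (hp₁ ▸ this).symm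

theorem monotoneOn_or_antitoneOn_of_fibers
    (hup : ∀ i, i + 1 < m → ∀ c, q i < c → q (i + 1) ≤ c)
    (hdown : ∀ i, i + 1 < m → ∀ c, c < q i → c ≤ q (i + 1))
    (hfib : ∀ i j k, i ≤ j → j ≤ k → k < m → q i = q k → q j = q i) :
    MonotoneOn q (Set.Iio m) ∨ AntitoneOn q (Set.Iio m) := by
  by_contra! h
  obtain ⟨t, ht, hdec⟩ : ∃ t, t + 1 < m ∧ q (t + 1) < q t := by
    by_contra! H
    exact h.1 (monotoneOn_of_le_add_one Set.ordConnected_Iio fun a _ _ ha => H a ha)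
  obtain ⟨s, hs, hinc⟩ : ∃ s, s + 1 < m ∧ q s < q (s + 1) := by
    by_contra! H
    exact h.2 (antitoneOn_of_add_one_le Set.ordConnected_Iio fun a _ _ ha => H a ha)
  rcases le_total s t with hst | hts
  · exact false_of_rise_of_fall hup hdown hfib hst ht hinc hdec
  -- a valley of `q` is a peak for the dual order
  · exact false_of_rise_of_fall (β := βᵒᵈ) hdown hup hfib hts hs hdec hinc

end Walk

section Positions

variable {W W' : Type*} {R : W → W → Prop} {l : List W}

noncomputable def posIn (l : List W) (x : W) : ℕ := by
  classical exact l.idxOf x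

theorem posIn_lt {x : W} (h : x ∈ l) : posIn l x < l.length := by
  classical unfold posIn; exact List.idxOf_lt_length_iff.mpr h

theorem getElem_posIn {x : W} (h : x ∈ l) : l[posIn l x]'(posIn_lt h) = x := by
  classical unfold posIn; exact List.getElem_idxOf _

theorem posIn_getElem (hnd : l.Nodup) (i : ℕ) (hi : i < l.length) : posIn l l[i] = i := by
  classical unfold posIn; exact hnd.idxOf_getElem i hi

theorem posIn_reverse (hnd : l.Nodup) {x : W} (h : x ∈ l) :
    posIn l.reverse x = l.length - 1 - posIn l x := by
  have hlt := posIn_lt h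
  have : l.reverse[l.length - 1 - posIn l x]'(by simp; omega) = x := by
    rw [List.getElem_reverse]
    convert getElem_posIn h using 2
    omega
  conv_lhs => rw [← this]
  exact posIn_getElem (List.nodup_reverse.mpr hnd) _ _

theorem IsSpanningPath.posIn_injective (hl : IsSpanningPath R l) :
    Function.Injective (posIn l) := fun u v h => by
  rw [← getElem_posIn (hl.mem u), ← getElem_posIn (hl.mem v)]
  simp only [h]

theorem IsSpanningPath.rel_iff (hl : IsSpanningPath R l) (u v : W) :
    R u v ↔ posIn l u ≤ posIn l v + 1 ∧ posIn l v ≤ posIn l u + 1 := by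
  conv_lhs => rw [← getElem_posIn (hl.mem u), ← getElem_posIn (hl.mem v)]
  exact hl.isPathList _ _ _ _

theorem IsSpanningPath.getElem_mem_of_relConnected (hl : IsSpanningPath R l) {T : Set W}
    (hT : RelConnected R T) {i j k : ℕ} (hij : i ≤ j) (hjk : j ≤ k) (hk : k < l.length)
    (hi : l[i] ∈ T) (hk' : l[k] ∈ T) : l[j] ∈ T := by
  by_contra hj
  have hpos (n : ℕ) (hn : n < l.length) : posIn l l[n] = n := posIn_getElem hl.nodup n hn
  have hij' : i ≠ j := by rintro rfl; exact hj hi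
  have hjk' : j ≠ k := by rintro rfl; exact hj hk'
  refine not_relConnected_of_partition (A := {x ∈ T | posIn l x < j})
    (B := {x ∈ T | j < posIn l x}) ⟨l[i], hi, by rw [hpos]; omega⟩
    ⟨l[k], hk', by rw [hpos]; omega⟩
    (Set.disjoint_left.mpr fun x h h' => by have := h.2; have := h'.2; omega) ?_ ?_ hT
  · ext x
    simp only [Set.mem_union, Set.mem_ofPred_eq]
    have hxj : x ∈ T → posIn l x ≠ j := fun hx h => hj (by
      subst h; rwa [getElem_posIn (hl.mem x)])
    constructor
    · rintro (h | h) <;> exact h.1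
    · intro hx
      have := hxj hx
      rcases Nat.lt_or_gt_of_ne this with h | h
      · exact .inl ⟨hx, h⟩
      · exact .inr ⟨hx, h⟩
  · rintro a ⟨-, ha⟩ b ⟨-, hb⟩ hab
    have := (hl.rel_iff a b).mp hab
    omega

def PosMonotone (f : W → W') (l' : List W') (l : List W) : Prop :=
  ∀ u v, posIn l u ≤ posIn l v → posIn l' (f u) ≤ posIn l' (f v)

/-- Read along `l`, the positions of the images move by at most one per step, and the fibres,
being connected, are intervals. -/
theorem IsSpanningPath.posMonotone_or_posMonotone_reverse {R' : W' → W' → Prop}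
    {l' : List W'} (hl : IsSpanningPath R l) (hl' : IsSpanningPath R' l') {f : W → W'}
    (hf : ∀ a b, R a b → R' (f a) (f b)) (hfib : ∀ y, RelConnected R (f ⁻¹' {y})) :
    PosMonotone f l' l ∨ PosMonotone f l' l.reverse := by
  let q : ℕ → ℕ := fun i => if hi : i < l.length then posIn l' (f l[i]) else 0
  have hq (i : ℕ) (hi : i < l.length) : q i = posIn l' (f l[i]) := dif_pos hi
  have hqpos (u : W) : q (posIn l u) = posIn l' (f u) := by
    rw [hq _ (posIn_lt (hl.mem u)), getElem_posIn (hl.mem u)]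
  have hstep (i : ℕ) (hi : i + 1 < l.length) :
      q (i + 1) ≤ q i + 1 ∧ q i ≤ q (i + 1) + 1 := by
    rw [hq i (by omega), hq (i + 1) hi, ← hl'.rel_iff]
    exact hf _ _ ((hl.isPathList (i + 1) i _ _).mpr (by omega))
  have hfib' (i j k : ℕ) (hij : i ≤ j) (hjk : j ≤ k) (hk : k < l.length) (hik : q i = q k) :
      q j = q i := by
    rw [hq i (by omega), hq k hk] at hik
    rw [hq i (by omega), hq j (by omega)]
    exact congrArg _ (hl.getElem_mem_of_relConnected (hfib (f l[i])) hij hjk hk rfl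
      (hl'.posIn_injective hik).symm)
  rcases monotoneOn_or_antitoneOn_of_fibers (q := q) (m := l.length)
    (fun i hi c hc => by have := hstep i hi; omega)
    (fun i hi c hc => by have := hstep i hi; omega) hfib' with hmono | hanti
  · left
    intro u v huv
    rw [← hqpos, ← hqpos]
    exact hmono (posIn_lt (hl.mem u)) (posIn_lt (hl.mem v)) huv
  · right
    intro u v huv
    have hu := posIn_lt (hl.mem u)
    have hv := posIn_lt (hl.mem v)
    rw [posIn_reverse hl.nodup (hl.mem u), posIn_reverse hl.nodup (hl.mem v)] at huv
    rw [← hqpos, ← hqpos]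
    exact hanti hv hu (by omega)

end Positions

section Tower

variable {V : ℕ → Type*} {E : ∀ n, V n → V n → Prop}

open Classical in
noncomputable def orientedPath (α : ∀ n, V (n + 1) → V n)
    (hpath : ∀ n, ∃ l, IsSpanningPath (E n) l) : ∀ n, List (V n)
  | 0 => (hpath 0).choose
  | n + 1 =>
    if PosMonotone (α n) (orientedPath α hpath n) (hpath (n + 1)).choose then
      (hpath (n + 1)).choose
    else (hpath (n + 1)).choose.reverse

variable (α : ∀ n, V (n + 1) → V n) (hpath : ∀ n, ∃ l, IsSpanningPath (E n) l)

theorem isSpanningPath_orientedPath (n : ℕ) :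
    IsSpanningPath (E n) (orientedPath α hpath n) := by
  cases n with
  | zero => exact (hpath 0).choose_spec
  | succ n =>
    rw [orientedPath]
    split_ifs
    · exact (hpath (n + 1)).choose_spec
    · exact (hpath (n + 1)).choose_spec.reverse

theorem posMonotone_orientedPath
    (horient : ∀ n l' l, IsSpanningPath (E n) l' → IsSpanningPath (E (n + 1)) l →
      PosMonotone (α n) l' l ∨ PosMonotone (α n) l' l.reverse) (n : ℕ) :
    PosMonotone (α n) (orientedPath α hpath n) (orientedPath α hpath (n + 1)) := by
  rw [orientedPath]
  split_ifs with h
  · exact h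
  · exact (horient n _ _ (isSpanningPath_orientedPath α hpath n)
      (hpath (n + 1)).choose_spec).resolve_left h

end Tower

section Threads

variable {V : ℕ → Type*} (α : ∀ n, V (n + 1) → V n)

def descend (n : ℕ) {k : ℕ} (h : n ≤ k) : V k → V n :=
  Nat.leRecOn h (fun {k} f x => f (α k x)) id

theorem descend_self {n : ℕ} (h : n ≤ n) (x : V n) : descend α n h x = x :=
  congrFun (Nat.leRecOn_self (C := fun k => V k → V n) _) x

theorem descend_succ {n k : ℕ} (h : n ≤ k) (h' : n ≤ k + 1) (x : V (k + 1)) :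
    descend α n h' x = descend α n h (α k x) :=
  congrFun (Nat.leRecOn_succ (C := fun k => V k → V n) h _) x

theorem bond_descend {n k : ℕ} (h : n + 1 ≤ k) (h' : n ≤ k) (x : V k) :
    α n (descend α (n + 1) h x) = descend α n h' x := by
  induction k, h using Nat.le_induction with
  | base => rw [descend_self, descend_succ α le_rfl h', descend_self]
  | succ k hk ih => rw [descend_succ α hk, descend_succ α (by omega) h', ih]

theorem exists_invLimV_apply_eq (hsurj : ∀ n, Function.Surjective (α n)) (N : ℕ) (v : V N) :
    ∃ x : InvLimV α, x.1 N = v := by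
  let u : ∀ m, V (N + m) := fun m => Nat.rec v (fun m um => (hsurj (N + m) um).choose) m
  have hu (m : ℕ) : α (N + m) (u (m + 1)) = u m := (hsurj (N + m) (u m)).choose_spec
  refine ⟨⟨fun n => descend α n (Nat.le_add_left n N) (u n), fun n => ?_⟩, ?_⟩
  · rw [bond_descend α _ (by omega), descend_succ α (Nat.le_add_left n N), hu]
  · have key (m : ℕ) (h : N ≤ N + m) : descend α N h (u m) = v := by
      induction m with
      | zero => exact descend_self α h _
      | succ m ih => rw [descend_succ α (Nat.le_add_right N m), hu, ih]
    exact key N _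

theorem InvLimV.rel_of_le {r : ∀ n, V n → V n → Prop}
    (hr : ∀ n a b, r (n + 1) a b → r n (α n a) (α n b)) (x y : InvLimV α) {n k : ℕ}
    (h : n ≤ k) (hk : r k (x.1 k) (y.1 k)) : r n (x.1 n) (y.1 n) := by
  induction k, h using Nat.le_induction with
  | base => exact hk
  | succ k _ ih => exact ih (x.2 k ▸ y.2 k ▸ hr k _ _ hk)

end Threads

section Connected

variable {V : ℕ → Type*} [∀ n, TopologicalSpace (V n)] {E : ∀ n, V n → V n → Prop}
  {α : ∀ n, V (n + 1) → V n}

theorem continuous_invLimV_apply (n : ℕ) : Continuous fun x : InvLimV α => x.1 n :=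
  (continuous_apply n).comp continuous_subtype_val

variable [∀ n, DiscreteTopology (V n)]

instance [∀ n, Finite (V n)] : CompactSpace (InvLimV α) := by
  have hcl : IsClosed {f : ∀ n, V n | ∀ n, α n (f (n + 1)) = f n} := by
    simp only [Set.ofPred_forall]
    exact isClosed_iInter fun n => isClosed_eq
      (continuous_of_discreteTopology.comp (continuous_apply _)) (continuous_apply n)
  exact isCompact_iff_compactSpace.mp hcl.isCompact

/-- Compactness: the closed sets of pairs with an edge at level `n` decrease to the edge set
of the limit, which misses `P ×ˢ Q`. -/
theorem exists_level_forall_not_rel [∀ n, Finite (V n)]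
    (hE : ∀ n a b, E (n + 1) a b → E n (α n a) (α n b)) {P Q : Set (InvLimV α)}
    (hP : IsClosed P) (hQ : IsClosed Q) (hno : ∀ p ∈ P, ∀ q ∈ Q, ¬ InvLimE E α p q) :
    ∃ N, ∀ p ∈ P, ∀ q ∈ Q, ¬ E N (p.1 N) (q.1 N) := by
  let Z : ℕ → Set (InvLimV α × InvLimV α) := fun n => {z | E n (z.1.1 n) (z.2.1 n)}
  have hZ (n : ℕ) : IsClosed (Z n) :=
    (isClosed_discrete {w : V n × V n | E n w.1 w.2}).preimage
      (((continuous_invLimV_apply n).comp continuous_fst).prodMk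
        ((continuous_invLimV_apply n).comp continuous_snd))
  have hdir : Directed (· ⊇ ·) Z := fun m n =>
    ⟨max m n, fun z hz => InvLimV.rel_of_le α hE z.1 z.2 (le_max_left m n) hz,
      fun z hz => InvLimV.rel_of_le α hE z.1 z.2 (le_max_right m n) hz⟩
  have hempty : (P ×ˢ Q) ∩ ⋂ n, Z n = ∅ :=
    Set.eq_empty_of_forall_notMem fun z ⟨hz, hzZ⟩ =>
      hno z.1 hz.1 z.2 hz.2 (Set.mem_iInter.mp hzZ)
  obtain ⟨N, hN⟩ := (hP.prod hQ).isCompact.elim_directed_family_closed Z hZ hempty hdir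
  refine ⟨N, fun p hp q hq h => ?_⟩
  have : (p, q) ∈ (P ×ˢ Q) ∩ Z N := ⟨⟨hp, hq⟩, h⟩
  rwa [hN] at this

theorem tConnSet_univ_invLim [∀ n, Finite (V n)] (hrefl : ∀ n v, E n v v)
    (hE : ∀ n a b, E (n + 1) a b → E n (α n a) (α n b))
    (hsurj : ∀ n, Function.Surjective (α n)) (hconn : ∀ n, TConnSet (E n) Set.univ) :
    TConnSet (InvLimE E α) Set.univ := by
  rintro ⟨P, Q, hPne, hQne, hdisj, hunion, hPcl, hQcl, hno⟩
  obtain ⟨N, hN⟩ := exists_level_forall_not_rel hE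
    ((Homeomorph.Set.univ _).isClosed_preimage.mp hPcl)
    ((Homeomorph.Set.univ _).isClosed_preimage.mp hQcl) hno
  refine hconn N ⟨(·.1 N) '' P, (·.1 N) '' Q, hPne.image _, hQne.image _, ?_, ?_,
    isClosed_discrete _, isClosed_discrete _, ?_⟩
  · refine Set.disjoint_left.mpr ?_
    rintro _ ⟨p, hp, rfl⟩ ⟨q, hq, hqp⟩
    exact hN p hp q hq (by simp only at hqp; rw [hqp]; exact hrefl N _)
  · refine Set.eq_univ_of_forall fun v => ?_
    obtain ⟨x, rfl⟩ := exists_invLimV_apply_eq α hsurj N v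
    rcases hunion.symm ▸ Set.mem_univ x with hx | hx
    · exact .inl ⟨x, hx, rfl⟩
    · exact .inr ⟨x, hx, rfl⟩
  · rintro _ ⟨p, hp, rfl⟩ _ ⟨q, hq, rfl⟩
    exact hN p hp q hq

end Connected

section Ends

variable {V : ℕ → Type*} {α : ∀ n, V (n + 1) → V n} {L : Type*} [LinearOrder L]
  {pos : ∀ n, V n → L}

theorem exists_invLimV_forall_le [∀ n, Finite (V n)] [∀ n, Nonempty (V n)]
    (hinj : ∀ n, Function.Injective (pos n))
    (hmono : ∀ n u v, pos (n + 1) u ≤ pos (n + 1) v → pos n (α n u) ≤ pos n (α n v))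
    (hsurj : ∀ n, Function.Surjective (α n)) :
    ∃ a : InvLimV α, ∀ n v, pos n (a.1 n) ≤ pos n v := by
  choose m hm using fun n => Finite.exists_min (pos n)
  refine ⟨⟨m, fun n => hinj n (le_antisymm ?_ (hm n _))⟩, hm⟩
  obtain ⟨z, hz⟩ := hsurj n (m n)
  exact hz ▸ hmono n _ _ (hm (n + 1) z)

theorem InvLimV.pos_lt_of_le
    (hmono : ∀ n u v, pos (n + 1) u ≤ pos (n + 1) v → pos n (α n u) ≤ pos n (α n v))
    {x y : InvLimV α} {n k : ℕ} (h : n ≤ k) (hlt : pos n (x.1 n) < pos n (y.1 n)) :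
    pos k (x.1 k) < pos k (y.1 k) :=
  lt_of_not_ge fun hle => hlt.not_ge <|
    InvLimV.rel_of_le α (r := fun n a b => pos n a ≤ pos n b) hmono y x h hle

variable [∀ n, TopologicalSpace (V n)] [∀ n, DiscreteTopology (V n)]

theorem isOpen_setOf_exists_level (S : Set (InvLimV α)) (p : ∀ n, V n → Prop) :
    IsOpen {y : S | ∃ n, p n ((y : InvLimV α).1 n)} := by
  simp only [Set.ofPred_exists]
  exact isOpen_iUnion fun n => (isOpen_discrete {w | p n w}).preimage
    ((continuous_invLimV_apply n).comp continuous_subtype_val)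

theorem isClosed_of_isOpen_of_union_eq {X : Type*} [TopologicalSpace X] {S P Q : Set X}
    (hunion : P ∪ Q = S) (hdisj : Disjoint P Q) (hQ : IsOpen {y : S | (y : X) ∈ Q}) :
    IsClosed {y : S | (y : X) ∈ P} := by
  have : {y : S | (y : X) ∈ P} = {y : S | (y : X) ∈ Q}ᶜ := by
    ext ⟨y, hy⟩
    rw [← hunion] at hy
    simp only [Set.mem_ofPred_eq, Set.mem_compl_iff]
    exact ⟨fun hP hQ => Set.disjoint_left.mp hdisj hP hQ, hy.resolve_right⟩
  exact this ▸ hQ.isClosed_compl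

/-- The rest of the limit splits into the threads eventually below `x` and those eventually
above it; an edge between the two parts would jump over `x` at some level. -/
theorem not_tConnSet_diff {E : ∀ n, V n → V n → Prop}
    (hinj : ∀ n, Function.Injective (pos n))
    (hmono : ∀ n u v, pos (n + 1) u ≤ pos (n + 1) v → pos n (α n u) ≤ pos n (α n v))
    (hE : ∀ n u v w, E n u v → pos n u < pos n w → pos n w < pos n v → False)
    {a b x : InvLimV α} (ha : ∀ n v, pos n (a.1 n) ≤ pos n v)
    (hb : ∀ n v, pos n v ≤ pos n (b.1 n)) (hxa : x ≠ a) (hxb : x ≠ b) :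
    ¬ TConnSet (InvLimE E α) (Set.univ \ {x}) := by
  have hne {y : InvLimV α} (hy : y ≠ x) : ∃ n, pos n (y.1 n) ≠ pos n (x.1 n) := by
    by_contra! h
    exact hy (Subtype.ext (funext fun n => hinj n (h n)))
  let P := {y : InvLimV α | ∃ n, pos n (y.1 n) < pos n (x.1 n)}
  let Q := {y : InvLimV α | ∃ n, pos n (x.1 n) < pos n (y.1 n)}
  have hdisj : Disjoint P Q := Set.disjoint_left.mpr fun y ⟨n, hn⟩ ⟨k, hk⟩ =>
    lt_asymm (InvLimV.pos_lt_of_le hmono (le_max_left n k) hn)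
      (InvLimV.pos_lt_of_le hmono (le_max_right n k) hk)
  have hunion : P ∪ Q = Set.univ \ {x} := by
    ext y
    simp only [P, Q, Set.mem_union, Set.mem_ofPred_eq, Set.mem_sdiff, Set.mem_univ, true_and,
      Set.mem_singleton_iff]
    refine ⟨by rintro (⟨n, hn⟩ | ⟨n, hn⟩) rfl <;> exact lt_irrefl _ hn, fun hy => ?_⟩
    obtain ⟨n, hn⟩ := hne hy
    exact hn.lt_or_gt.imp (⟨n, ·⟩) (⟨n, ·⟩)
  have hPo := isOpen_setOf_exists_level (Set.univ \ {x}) fun n w => pos n w < pos n (x.1 n)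
  have hQo := isOpen_setOf_exists_level (Set.univ \ {x}) fun n w => pos n (x.1 n) < pos n w
  refine fun h => h ⟨P, Q, ?_, ?_, hdisj, hunion,
    isClosed_of_isOpen_of_union_eq hunion hdisj hQo,
    isClosed_of_isOpen_of_union_eq (Set.union_comm Q P ▸ hunion) hdisj.symm hPo, ?_⟩
  · obtain ⟨n, hn⟩ := hne hxa.symm
    exact ⟨a, n, lt_of_le_of_ne (ha n _) hn⟩
  · obtain ⟨n, hn⟩ := hne hxb.symm
    exact ⟨b, n, lt_of_le_of_ne' (hb n _) hn⟩
  · rintro p ⟨n, hn⟩ q ⟨k, hk⟩ hpq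
    exact hE _ _ _ _ (hpq (max n k)) (InvLimV.pos_lt_of_le hmono (le_max_left n k) hn)
      (InvLimV.pos_lt_of_le hmono (le_max_right n k) hk)

theorem exists_forall_not_tConnSet_diff [∀ n, Finite (V n)] [∀ n, Nonempty (V n)]
    {E : ∀ n, V n → V n → Prop} (hinj : ∀ n, Function.Injective (pos n))
    (hmono : ∀ n u v, pos (n + 1) u ≤ pos (n + 1) v → pos n (α n u) ≤ pos n (α n v))
    (hsurj : ∀ n, Function.Surjective (α n))
    (hE : ∀ n u v w, E n u v → pos n u < pos n w → pos n w < pos n v → False) :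
    ∃ a b : InvLimV α, ∀ x : InvLimV α, x ≠ a → x ≠ b →
      ¬ TConnSet (InvLimE E α) (Set.univ \ {x}) := by
  obtain ⟨a, ha⟩ := exists_invLimV_forall_le hinj hmono hsurj
  obtain ⟨b, hb⟩ := exists_invLimV_forall_le (L := Lᵒᵈ)
    (pos := fun n v => OrderDual.toDual (pos n v)) hinj (fun n u v h => hmono n v u h) hsurj
  exact ⟨a, b, fun x hxa hxb => not_tConnSet_diff hinj hmono hE ha hb hxa hxb⟩

end Ends

end ArcInverseLimit

open ArcInverseLimit

/-- The inverse limit of an inverse sequence of finite arcs with monotone epimorphic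
bonding maps is an arc. -/
theorem statement16 {V : ℕ → Type*} [∀ n, Fintype (V n)]
    [∀ n, TopologicalSpace (V n)] [∀ n, DiscreteTopology (V n)]
    (E : ∀ n, V n → V n → Prop)
    (hgraph : ∀ n, (∀ v, E n v v) ∧ ∀ a b, E n a b → E n b a)
    (α : ∀ n, V (n + 1) → V n)
    (hepi : ∀ n, IsEpi (E (n + 1)) (E n) (α n))
    (hmono : ∀ n, ∀ y : V n, TConnSet (E (n + 1)) (α n ⁻¹' {y}))
    (harc : ∀ n, TConnSet (E n) Set.univ ∧
      ∃ a b : V n, ∀ x : V n, x ≠ a → x ≠ b →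
        ¬ TConnSet (E n) (Set.univ \ {x})) :
    TConnSet (InvLimE E α) Set.univ ∧
      ∃ a b : InvLimV α, ∀ x : InvLimV α, x ≠ a → x ≠ b →
        ¬ TConnSet (InvLimE E α) (Set.univ \ {x}) := by
  have : ∀ n, Std.Refl (E n) := fun n => ⟨(hgraph n).1⟩
  have : ∀ n, Std.Symm (E n) := fun n => ⟨(hgraph n).2⟩
  have : ∀ n, Nonempty (V n) := fun n => ⟨(harc n).2.choose⟩
  have hpath (n : ℕ) : ∃ l, IsSpanningPath (E n) l := by
    obtain ⟨a, b, hab⟩ := (harc n).2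
    exact exists_isSpanningPath (tConnSet_iff_relConnected.mp (harc n).1) (a := a) (b := b)
      fun x hxa hxb h => hab x hxa hxb (tConnSet_iff_relConnected.mpr h)
  have hl := isSpanningPath_orientedPath α hpath
  have horient := posMonotone_orientedPath α hpath fun n l' l hl' hl =>
    hl.posMonotone_or_posMonotone_reverse hl' (hepi n).1
      fun y => tConnSet_iff_relConnected.mp (hmono n y)
  refine ⟨tConnSet_univ_invLim (fun n => (hgraph n).1) (fun n => (hepi n).1)
    (fun n => (hepi n).2.1) (fun n => (harc n).1), ?_⟩
  refine exists_forall_not_tConnSet_diff (pos := fun n => posIn (orientedPath α hpath n))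
    (fun n => (hl n).posIn_injective) horient (fun n => (hepi n).2.1) ?_
  intro n u v w huv hu hv
  have := ((hl n).rel_iff u v).mp huv
  omega
end

section
/- Let {T_n, α_n} be an inverse sequence in which each T_n is a finite tree and each bonding map α_n : T_{n+1} → T_n is an epimorphism. Then the inverse limit topological graph T = lim← {T_n, α_n} is hereditarily unicoherent: for every two closed connected subsets P and Q of V(T), the intersection P ∩ Q is connected. -/
/-- `l` is a (simple) path from `a` to `b` in the graph. -/
def IsPathList {V : Type*} (E : V → V → Prop) (a b : V) (l : List V) : Prop :=
  l.Nodup ∧ l.Chain' E ∧ l.head? = some a ∧ l.getLast? = some b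

/-- A finite graph is a tree if any two distinct vertices are joined by a unique path. -/
def IsTreeRel {V : Type*} (E : V → V → Prop) : Prop :=
  ∀ a b : V, a ≠ b → ∃! l : List V, IsPathList E a b l

open Relation

/-! Work with the projections `π_m : V(T) → V(T_m)`. A closed set `S` is connected as soon as
every `π_m(S)` is connected in `T_m`: by compactness, a separation of `S` with no edge between
its parts already has no edge between their projections at some finite level. Conversely each
`π_m` of a connected set is connected. In a tree, any intersection of connected sets is
connected, because the unique path between two of its points lies in each of them. Finally,
by compactness again, `π_m(P ∩ Q) = ⋂ⱼ α_{m,m+j}(π_{m+j}(P) ∩ π_{m+j}(Q))`, an intersection of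
connected subsets of `T_m`. -/

section ChainConnected

variable {W W' : Type*} {E : W → W → Prop} {S : Set W} {a b : W}

def RelOn (E : W → W → Prop) (S : Set W) : W → W → Prop :=
  fun u v => E u v ∧ u ∈ S ∧ v ∈ S

def ChainConnected (E : W → W → Prop) (S : Set W) : Prop :=
  ∀ a ∈ S, ∀ b ∈ S, ReflTransGen (RelOn E S) a b

lemma exists_isPathList_of_reflTransGen (hb : b ∈ S) (h : ReflTransGen (RelOn E S) a b) :
    ∃ l, IsPathList E a b l ∧ ∀ v ∈ l, v ∈ S := by
  induction h using ReflTransGen.head_induction_on with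
  | refl => exact ⟨[b], ⟨List.nodup_singleton b, List.isChain_singleton b, rfl, rfl⟩, by simpa⟩
  | @head a c hac _ ih =>
    obtain ⟨hE, haS, -⟩ := hac
    obtain ⟨l, ⟨hnd, hch, hhd, hlast⟩, hmem⟩ := ih
    by_cases hal : a ∈ l
    · -- shortcut the loop through `a`
      obtain ⟨l₁, l₂, rfl⟩ := List.append_of_mem hal
      refine ⟨a :: l₂, ⟨hnd.sublist (List.sublist_append_right l₁ _), hch.suffix ⟨l₁, rfl⟩,
        rfl, ?_⟩, fun v hv => hmem v (List.mem_append_right l₁ hv)⟩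
      rwa [List.getLast?_append_cons] at hlast
    · obtain ⟨l', rfl⟩ : ∃ l', l = c :: l' := by
        cases l with
        | nil => simp at hhd
        | cons x l' => exact ⟨l', by simpa using hhd⟩
      refine ⟨a :: c :: l', ⟨List.nodup_cons.2 ⟨hal, hnd⟩, hch.cons_cons hE, rfl, ?_⟩, ?_⟩
      · rwa [List.getLast?_cons_cons]
      · simpa [haS] using hmem

lemma reflTransGen_relOn_of_isChain {l : List W} (hch : l.IsChain E) (ha : l.head? = some a)
    (hb : l.getLast? = some b) (hS : ∀ v ∈ l, v ∈ S) : ReflTransGen (RelOn E S) a b := by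
  have hne : l ≠ [] := by rintro rfl; simp at ha
  have hchS : l.IsChain (RelOn E S) :=
    hch.imp_of_mem_imp fun u v hu hv huv => ⟨huv, hS u hu, hS v hv⟩
  rw [List.head?_eq_some_head hne, Option.some_inj] at ha
  rw [List.getLast?_eq_some_getLast hne, Option.some_inj] at hb
  exact ha ▸ hb ▸ List.relationReflTransGen_of_exists_isChain l hchS hne

lemma IsTreeRel.mem_of_isPathList (ht : IsTreeRel E) (hS : ChainConnected E S) (ha : a ∈ S)
    (hb : b ∈ S) (hab : a ≠ b) {l : List W} (hl : IsPathList E a b l) : ∀ v ∈ l, v ∈ S := by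
  obtain ⟨l', hl', hl'S⟩ := exists_isPathList_of_reflTransGen hb (hS a ha b hb)
  exact ((ht a b hab).unique hl hl') ▸ hl'S

lemma IsTreeRel.chainConnected_iInter (ht : IsTreeRel E) {ι : Sort*} {S : ι → Set W}
    (hS : ∀ i, ChainConnected E (S i)) : ChainConnected E (⋂ i, S i) := by
  intro a ha b hb
  rw [Set.mem_iInter] at ha hb
  rcases eq_or_ne a b with rfl | hab
  · exact .refl
  obtain ⟨l, hl, -⟩ := ht a b hab
  exact reflTransGen_relOn_of_isChain hl.2.1 hl.2.2.1 hl.2.2.2 fun v hv =>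
    Set.mem_iInter.2 fun i => ht.mem_of_isPathList (hS i) (ha i) (hb i) hab hl v hv

lemma IsTreeRel.chainConnected_inter (ht : IsTreeRel E) {T : Set W} (hS : ChainConnected E S)
    (hT : ChainConnected E T) : ChainConnected E (S ∩ T) := by
  rw [Set.inter_eq_iInter]
  exact ht.chainConnected_iInter (Bool.rec hT hS)

lemma ChainConnected.image {E' : W' → W' → Prop} {f : W → W'}
    (hf : ∀ a b, E a b → E' (f a) (f b)) (hS : ChainConnected E S) :
    ChainConnected E' (f '' S) := by
  rintro _ ⟨a, ha, rfl⟩ _ ⟨b, hb, rfl⟩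
  exact (hS a ha b hb).lift f fun u v ⟨huv, hu, hv⟩ => ⟨hf u v huv, ⟨u, hu, rfl⟩, ⟨v, hv, rfl⟩⟩

end ChainConnected

lemma isClosed_of_isClosed_subtype {X : Type*} [TopologicalSpace X] {S P : Set X}
    (hS : IsClosed S) (hPS : P ⊆ S) (hP : IsClosed {x : S | (x : X) ∈ P}) : IsClosed P := by
  have : IsClosed (Subtype.val '' (Subtype.val ⁻¹' P : Set S)) := hP.trans hS
  rwa [Subtype.image_preimage_coe, Set.inter_eq_right.2 hPS] at this

lemma isClosed_subtype_inter {X : Type*} [TopologicalSpace X] {S T : Set X} (hT : IsClosed T) :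
    IsClosed {x : S | (x : X) ∈ S ∩ T} := by
  have : {x : S | (x : X) ∈ S ∩ T} = Subtype.val ⁻¹' T := Set.ext fun x => and_iff_right x.2
  exact this ▸ hT.preimage continuous_subtype_val

namespace InvLim

variable {V : ℕ → Type*} {α : ∀ n, V (n + 1) → V n}

def proj (α : ∀ n, V (n + 1) → V n) (m : ℕ) : InvLimV α → V m := fun x => x.1 m

def bond (α : ∀ n, V (n + 1) → V n) (m : ℕ) : ∀ j, V (m + j) → V m
  | 0 => id
  | j + 1 => fun x => bond α m j (α (m + j) x)

lemma bond_proj (x : InvLimV α) (m : ℕ) : ∀ j, bond α m j (proj α (m + j) x) = proj α m x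
  | 0 => rfl
  | j + 1 => by
      change bond α m j (α (m + j) (x.1 (m + j + 1))) = x.1 m
      rw [x.2 (m + j)]
      exact bond_proj x m j

lemma bond_rel {R : ∀ n, V n → V n → Prop}
    (hR : ∀ n a b, R (n + 1) a b → R n (α n a) (α n b)) (m : ℕ) :
    ∀ j (a b : V (m + j)), R (m + j) a b → R m (bond α m j a) (bond α m j b)
  | 0, _, _, h => h
  | j + 1, a, b, h => bond_rel hR m j _ _ (hR (m + j) a b h)

lemma rel_proj_of_le {R : ∀ n, V n → V n → Prop}
    (hR : ∀ n a b, R (n + 1) a b → R n (α n a) (α n b)) (x y : InvLimV α) {k n : ℕ}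
    (hkn : k ≤ n) (h : R n (proj α n x) (proj α n y)) : R k (proj α k x) (proj α k y) := by
  induction n, hkn using Nat.le_induction with
  | base => exact h
  | succ n _ ih =>
    apply ih
    simpa only [proj, x.2 n, y.2 n] using hR n _ _ h

variable [∀ n, TopologicalSpace (V n)]

@[fun_prop]
lemma continuous_proj (m : ℕ) : Continuous (proj α m) :=
  (continuous_apply m).comp continuous_subtype_val

variable [∀ n, DiscreteTopology (V n)] [∀ n, Finite (V n)]

lemma isClosed_setOf_compatible : IsClosed {x : ∀ n, V n | ∀ n, α n (x (n + 1)) = x n} := by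
  rw [Set.ofPred_forall]
  exact isClosed_iInter fun n =>
    isClosed_eq (continuous_of_discreteTopology.comp (continuous_apply _)) (continuous_apply _)

instance : CompactSpace (InvLimV α) :=
  isCompact_iff_compactSpace.mp isClosed_setOf_compatible.isCompact

lemma exists_forall_rel_of_forall_exists_rel {P Q : Set (InvLimV α)} (hP : IsClosed P)
    (hQ : IsClosed Q) {R : ∀ n, V n → V n → Prop}
    (hR : ∀ n a b, R (n + 1) a b → R n (α n a) (α n b))
    (h : ∀ n, ∃ p ∈ P, ∃ q ∈ Q, R n (proj α n p) (proj α n q)) :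
    ∃ p ∈ P, ∃ q ∈ Q, ∀ n, R n (proj α n p) (proj α n q) := by
  set C : ℕ → Set (InvLimV α × InvLimV α) :=
    fun n => P ×ˢ Q ∩ {pq | R n (proj α n pq.1) (proj α n pq.2)}
  have hC_closed : ∀ n, IsClosed (C n) := fun n =>
    (hP.prod hQ).inter ((isClosed_discrete {ab : V n × V n | R n ab.1 ab.2}).preimage (by fun_prop :
      Continuous fun pq : InvLimV α × InvLimV α => (proj α n pq.1, proj α n pq.2)))
  have hC_mono : ∀ n, C (n + 1) ⊆ C n := by
    rintro n ⟨p, q⟩ ⟨hpq, hR'⟩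
    refine ⟨hpq, show R n (proj α n p) (proj α n q) from ?_⟩
    simpa only [proj, p.2 n, q.2 n] using hR n _ _ hR'
  have hC_ne : ∀ n, (C n).Nonempty := fun n => by
    obtain ⟨p, hp, q, hq, hpq⟩ := h n
    exact ⟨(p, q), ⟨hp, hq⟩, hpq⟩
  obtain ⟨⟨p, q⟩, hpq⟩ := IsCompact.nonempty_iInter_of_sequence_nonempty_isCompact_isClosed
    C hC_mono hC_ne (hC_closed 0).isCompact hC_closed
  rw [Set.mem_iInter] at hpq
  exact ⟨p, (hpq 0).1.1, q, (hpq 0).1.2, fun n => (hpq n).2⟩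

lemma image_proj_inter_eq_iInter {P Q : Set (InvLimV α)} (hP : IsClosed P) (hQ : IsClosed Q)
    (m : ℕ) : proj α m '' (P ∩ Q) =
      ⋂ j, bond α m j '' (proj α (m + j) '' P ∩ proj α (m + j) '' Q) := by
  refine subset_antisymm ?_ fun v hv => ?_
  · rintro _ ⟨x, ⟨hxP, hxQ⟩, rfl⟩
    exact Set.mem_iInter.2 fun j => ⟨proj α (m + j) x, ⟨⟨x, hxP, rfl⟩, ⟨x, hxQ, rfl⟩⟩,
      bond_proj x m j⟩
  have hPv : IsClosed (P ∩ proj α m ⁻¹' {v}) :=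
    hP.inter ((isClosed_discrete _).preimage (continuous_proj m))
  have hR : ∀ n (a b : V (n + 1)), a = b → α n a = α n b := fun n _ _ => congrArg (α n)
  obtain ⟨p, ⟨hp, hpv⟩, q, hq, hpq⟩ := exists_forall_rel_of_forall_exists_rel hPv hQ hR fun n => by
    obtain ⟨w, ⟨⟨p, hp, rfl⟩, ⟨q, hq, hqp⟩⟩, hpv⟩ := Set.mem_iInter.1 hv n
    exact ⟨p, ⟨hp, (bond_proj p m n).symm.trans hpv⟩, q, hq,
      rel_proj_of_le (R := fun _ a b => a = b) hR p q (Nat.le_add_left n m) hqp.symm⟩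
  obtain rfl : p = q := Subtype.ext (funext hpq)
  exact ⟨p, ⟨hp, hq⟩, hpv⟩

end InvLim

open InvLim

section Connectedness

variable {V : ℕ → Type*} [∀ n, TopologicalSpace (V n)] [∀ n, DiscreteTopology (V n)]
  {E : ∀ n, V n → V n → Prop} {α : ∀ n, V (n + 1) → V n} {S : Set (InvLimV α)}

lemma TConnSet.chainConnected_image_proj (hS : TConnSet (InvLimE E α) S) (m : ℕ) :
    ChainConnected (E m) (proj α m '' S) := by
  intro a ha b hb
  by_contra hab
  -- separate `S` by the component of `a` in the projection
  set A : Set (V m) := {v | ReflTransGen (RelOn (E m) (proj α m '' S)) a v}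
  refine hS ⟨S ∩ proj α m ⁻¹' A, S ∩ proj α m ⁻¹' Aᶜ, ?_, ?_, ?_, ?_, ?_, ?_, ?_⟩
  · obtain ⟨x, hx, rfl⟩ := ha
    exact ⟨x, hx, .refl⟩
  · obtain ⟨y, hy, rfl⟩ := hb
    exact ⟨y, hy, hab⟩
  · exact Set.disjoint_left.2 fun x hxA hxAc => hxAc.2 hxA.2
  · rw [← Set.inter_union_distrib_left, ← Set.preimage_union, Set.union_compl_self,
      Set.preimage_univ, Set.inter_univ]
  · exact isClosed_subtype_inter ((isClosed_discrete A).preimage (continuous_proj m))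
  · exact isClosed_subtype_inter ((isClosed_discrete Aᶜ).preimage (continuous_proj m))
  · rintro x ⟨hx, hxA⟩ y ⟨hy, hyA⟩ hxy
    exact hyA (ReflTransGen.tail hxA ⟨hxy m, ⟨x, hx, rfl⟩, ⟨y, hy, rfl⟩⟩)

variable [∀ n, Finite (V n)]

lemma tConnSet_of_chainConnected_image_proj (hrefl : ∀ n v, E n v v)
    (hE : ∀ n a b, E (n + 1) a b → E n (α n a) (α n b)) (hS : IsClosed S)
    (h : ∀ n, ChainConnected (E n) (proj α n '' S)) : TConnSet (InvLimE E α) S := by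
  rintro ⟨P, Q, ⟨p₀, hp₀⟩, ⟨q₀, hq₀⟩, -, rfl, hPS, hQS, hPQ⟩
  have hP := isClosed_of_isClosed_subtype hS Set.subset_union_left hPS
  have hQ := isClosed_of_isClosed_subtype hS Set.subset_union_right hQS
  by_cases hlevels : ∀ n, ∃ p ∈ P, ∃ q ∈ Q, E n (proj α n p) (proj α n q)
  · obtain ⟨p, hp, q, hq, hpq⟩ := exists_forall_rel_of_forall_exists_rel hP hQ hE hlevels
    exact hPQ p hp q hq hpq
  push_neg at hlevels
  obtain ⟨n, hn⟩ := hlevels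
  -- with no edge between `P` and `Q` at level `n`, walks in `π n (P ∪ Q)` cannot leave `π n P`
  have hwalk : ∀ v, ReflTransGen (RelOn (E n) (proj α n '' (P ∪ Q))) (proj α n p₀) v →
      v ∈ proj α n '' P := by
    intro v hv
    induction hv with
    | refl => exact ⟨p₀, hp₀, rfl⟩
    | tail _ hstep ih =>
      obtain ⟨hedge, -, z, hz | hz, rfl⟩ := hstep
      · exact ⟨z, hz, rfl⟩
      · obtain ⟨w, hw, hwv⟩ := ih
        exact absurd (hwv ▸ hedge) (hn w hw z hz)
  obtain ⟨w, hw, hwq⟩ := hwalk _ (h n _ ⟨p₀, .inl hp₀, rfl⟩ _ ⟨q₀, .inr hq₀, rfl⟩)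
  exact hn w hw q₀ hq₀ (hwq ▸ hrefl n _)

end Connectedness

/-- The inverse limit of an inverse sequence of finite trees with epimorphic bonding
maps is hereditarily unicoherent. -/
theorem statement17 {V : ℕ → Type*} [∀ n, Fintype (V n)]
    [∀ n, TopologicalSpace (V n)] [∀ n, DiscreteTopology (V n)]
    (E : ∀ n, V n → V n → Prop)
    (hgraph : ∀ n, (∀ v, E n v v) ∧ ∀ a b, E n a b → E n b a)
    (htree : ∀ n, IsTreeRel (E n))
    (α : ∀ n, V (n + 1) → V n)
    (hepi : ∀ n, IsEpi (E (n + 1)) (E n) (α n)) :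
    ∀ P Q : Set (InvLimV α), IsClosed P → IsClosed Q →
      TConnSet (InvLimE E α) P → TConnSet (InvLimE E α) Q →
      TConnSet (InvLimE E α) (P ∩ Q) := by
  intro P Q hPcl hQcl hP hQ
  have hE : ∀ n a b, E (n + 1) a b → E n (α n a) (α n b) := fun n => (hepi n).1
  refine tConnSet_of_chainConnected_image_proj (fun n => (hgraph n).1) hE (hPcl.inter hQcl)
    fun m => ?_
  rw [image_proj_inter_eq_iInter hPcl hQcl m]
  exact (htree m).chainConnected_iInter fun j =>
    ((htree (m + j)).chainConnected_inter (hP.chainConnected_image_proj (m + j))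
      (hQ.chainConnected_image_proj (m + j))).image (bond_rel hE m j)
end
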